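/- arXiv:2106.04748 — 4 statements merged into one kernel-verified Lean document; each statement's English description precedes it below -/
import Mathlib

section
/- Let x̂* = (x*_1,…,x*_m) be a Nash equilibrium of a graphical constant-sum game. Then for every profile of mixed strategies x̂ = (x_1,…,x_m) with x_i ∈ Δ^{n_i}, one has ∑_{i=1}^m ⟨x_i − x*_i, p_i(x̂)⟩ ≤ 0; equivalently, the game operator with shift x̂* is passive with the zero storage function. -/
open scoped BigOperators
open MeasureTheory

noncomputable section

/-- The standard probability simplex in ℝᵈ. -/
def simplex (d : ℕ) : Set (Fin d → ℝ) := {x | (∀ j, 0 ≤ x j) ∧ ∑ j, x j = 1}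

/-- Euclidean inner product on ℝᵈ. -/
def dot {d : ℕ} (a b : Fin d → ℝ) : ℝ := ∑ j, a j * b j

/-- Agent i's payoff vector in a graphical game: pᵢ(x̂) = ∑_{k ≠ i} A^{ik} x_k. -/
def payoff {m : ℕ} {n : Fin m → ℕ}
    (A : (i k : Fin m) → Matrix (Fin (n i)) (Fin (n k)) ℝ)
    (x : (k : Fin m) → Fin (n k) → ℝ) (i : Fin m) : Fin (n i) → ℝ :=
  ∑ k ∈ Finset.univ.erase i, (A i k).mulVec (x k)


/- STATEMENT 14: If x̂* is a Nash equilibrium of a graphical constant-sum game, then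
for every profile x̂ of mixed strategies, ∑ᵢ ⟨xᵢ − x*ᵢ, pᵢ(x̂)⟩ ≤ 0: the game operator
with shift x̂* is passive with the zero storage function. -/

theorem graphical_constant_sum_game_operator_passive
    (m : ℕ) (n : Fin m → ℕ)
    (A : (i k : Fin m) → Matrix (Fin (n i)) (Fin (n k)) ℝ)
    (c : Fin m → Fin m → ℝ) (hcsym : ∀ i k, c i k = c k i)
    (hconst : ∀ i k, i ≠ k → ∀ (j : Fin (n i)) (l : Fin (n k)),
      A i k j l + A k i l j = c i k)
    (xstar : (i : Fin m) → Fin (n i) → ℝ)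
    (hxs : ∀ i, xstar i ∈ simplex (n i))
    (hNE : ∀ i, ∀ y ∈ simplex (n i),
      dot y (payoff A xstar i) ≤ dot (xstar i) (payoff A xstar i)) :
    ∀ (x : (k : Fin m) → Fin (n k) → ℝ), (∀ i, x i ∈ simplex (n i)) →
      ∑ i, dot (x i - xstar i) (payoff A x i) ≤ 0 := by
  intro x hx
  -- expand dot of payoff
  have hdot : ∀ (u v : (k : Fin m) → Fin (n k) → ℝ) (i : Fin m),
      dot (u i) (payoff A v i)
        = ∑ k ∈ Finset.univ.erase i, ∑ j, ∑ l, u i j * (A i k j l * v k l) := by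
    intro u v i
    simp only [dot, payoff, Finset.sum_apply, Matrix.mulVec, dotProduct,
      Finset.mul_sum]
    rw [Finset.sum_comm]
  -- swapping the two outer indices in a sum over off-diagonal pairs
  have hswap : ∀ f : Fin m → Fin m → ℝ,
      ∑ i, ∑ k ∈ Finset.univ.erase i, f i k
        = ∑ i, ∑ k ∈ Finset.univ.erase i, f k i := by
    intro f
    simp_rw [← Finset.filter_ne', Finset.sum_filter]
    rw [Finset.sum_comm]
    refine Finset.sum_congr rfl fun i _ => Finset.sum_congr rfl fun k _ => ?_
    simp [ne_comm]
  -- key constant-sum identity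
  have hkey : ∀ u v : (k : Fin m) → Fin (n k) → ℝ,
      (∀ i, u i ∈ simplex (n i)) → (∀ i, v i ∈ simplex (n i)) →
      (∑ i, dot (u i) (payoff A v i)) + (∑ i, dot (v i) (payoff A u i))
        = ∑ i, ∑ k ∈ Finset.univ.erase i, c i k := by
    intro u v hu hv
    simp_rw [hdot]
    rw [hswap (fun i k => ∑ j, ∑ l, v i j * (A i k j l * u k l))]
    rw [← Finset.sum_add_distrib]
    refine Finset.sum_congr rfl fun i _ => ?_
    rw [← Finset.sum_add_distrib]
    refine Finset.sum_congr rfl fun k hk => ?_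
    have hki : k ≠ i := (Finset.mem_erase.mp hk).1
    have h2 : (∑ j, ∑ l, v k j * (A k i j l * u i l))
        = ∑ j, ∑ l, u i j * (A k i l j * v k l) := by
      rw [Finset.sum_comm]
      refine Finset.sum_congr rfl fun j _ => Finset.sum_congr rfl fun l _ => ?_
      ring
    rw [h2, ← Finset.sum_add_distrib]
    have : (∑ j, ((∑ l, u i j * (A i k j l * v k l))
          + ∑ l, u i j * (A k i l j * v k l)))
        = ∑ j, u i j * ((∑ l, v k l) * c i k) := by
      refine Finset.sum_congr rfl fun j _ => ?_
      rw [← Finset.sum_add_distrib, Finset.sum_mul, Finset.mul_sum]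
      refine Finset.sum_congr rfl fun l _ => ?_
      have := hconst i k (fun h => hki h.symm) j l
      rw [← this]; ring
    rw [this, ← Finset.sum_mul, (hu i).2, (hv k).2]
    ring
  -- linearity of dot in first argument
  have hsub : ∀ i, dot (x i - xstar i) (payoff A x i)
      = dot (x i) (payoff A x i) - dot (xstar i) (payoff A x i) := by
    intro i
    simp [dot, sub_mul, Finset.sum_sub_distrib]
  have h1 := hkey x x hx hx
  have h2 := hkey xstar xstar hxs hxs
  have h3 := hkey x xstar hx hxs
  have hne : (∑ i, dot (x i) (payoff A xstar i))
      ≤ ∑ i, dot (xstar i) (payoff A xstar i) :=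
    Finset.sum_le_sum fun i _ => hNE i (x i) (hx i)
  simp_rw [hsub]
  rw [Finset.sum_sub_distrib]
  linarith
end
end

section
/- Let x̂* = (x*_1,…,x*_m) be a fully mixed Nash equilibrium of a graphical constant-sum game. Then for every profile of mixed strategies x̂ = (x_1,…,x_m) with x_i ∈ Δ^{n_i}, one has ∑_{i=1}^m ⟨x_i − x*_i, p_i(x̂)⟩ = 0; equivalently, the game operator with shift x̂* is lossless with the zero storage function. -/
open scoped BigOperators
open MeasureTheory

noncomputable section

/- STATEMENT 15: If x̂* is a fully mixed Nash equilibrium of a graphical constant-sum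
game, then for every profile x̂ of mixed strategies, ∑ᵢ ⟨xᵢ − x*ᵢ, pᵢ(x̂)⟩ = 0: the game
operator with shift x̂* is lossless with the zero storage function. -/


lemma dot_sub_left {d : ℕ} (a b w : Fin d → ℝ) :
    dot (a - b) w = dot a w - dot b w := by
  simp [dot, sub_mul, Finset.sum_sub_distrib]

lemma dot_sum_right {d : ℕ} {ι : Type*} (s : Finset ι) (u : Fin d → ℝ)
    (g : ι → Fin d → ℝ) : dot u (∑ k ∈ s, g k) = ∑ k ∈ s, dot u (g k) := by
  simp only [dot, Finset.sum_apply, Finset.mul_sum]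
  exact Finset.sum_comm

lemma pair_sum {d e : ℕ} (B : Matrix (Fin d) (Fin e) ℝ) (B' : Matrix (Fin e) (Fin d) ℝ)
    (cc : ℝ) (h : ∀ j l, B j l + B' l j = cc)
    (u : Fin d → ℝ) (v : Fin e → ℝ) (hu : ∑ j, u j = 1) (hv : ∑ l, v l = 1) :
    dot u (B.mulVec v) + dot v (B'.mulVec u) = cc := by
  simp only [dot, Matrix.mulVec, dotProduct, Finset.mul_sum]
  rw [show ∑ l, ∑ j, v l * (B' l j * u j) = ∑ j, ∑ l, v l * (B' l j * u j) from Finset.sum_comm]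
  rw [← Finset.sum_add_distrib]
  simp only [← Finset.sum_add_distrib]
  have : ∀ j l, u j * (B j l * v l) + v l * (B' l j * u j) = (u j * v l) * cc := by
    intro j l; rw [← h j l]; ring
  simp only [this]
  have e2 : ∑ j, ∑ l, u j * v l * cc = (∑ j, u j) * ((∑ l, v l) * cc) := by
    rw [Finset.sum_mul]
    exact Finset.sum_congr rfl fun j _ => by
      rw [Finset.sum_mul, Finset.mul_sum]
      exact Finset.sum_congr rfl fun l _ => by ring
  rw [e2, hu, hv]; ring

lemma sum_erase_comm {m : ℕ} (f : Fin m → Fin m → ℝ) :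
    ∑ i, ∑ k ∈ Finset.univ.erase i, f i k = ∑ k, ∑ i ∈ Finset.univ.erase k, f i k := by
  have h : ∀ a : Fin m, (Finset.univ.erase a) = Finset.univ.filter (· ≠ a) := fun a =>
    (Finset.filter_ne' Finset.univ a).symm
  simp_rw [h, Finset.sum_filter]
  rw [Finset.sum_comm]
  refine Finset.sum_congr rfl fun k _ => Finset.sum_congr rfl fun i _ => ?_
  by_cases hik : i = k <;> simp [hik, Ne.symm]

theorem graphical_constant_sum_game_operator_lossless
    (m : ℕ) (n : Fin m → ℕ)
    (A : (i k : Fin m) → Matrix (Fin (n i)) (Fin (n k)) ℝ)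
    (c : Fin m → Fin m → ℝ) (hcsym : ∀ i k, c i k = c k i)
    (hconst : ∀ i k, i ≠ k → ∀ (j : Fin (n i)) (l : Fin (n k)),
      A i k j l + A k i l j = c i k)
    (xstar : (i : Fin m) → Fin (n i) → ℝ)
    (hxs : ∀ i, xstar i ∈ simplex (n i))
    (hfull : ∀ i j, 0 < xstar i j)
    (hNE : ∀ i, ∀ y ∈ simplex (n i),
      dot y (payoff A xstar i) ≤ dot (xstar i) (payoff A xstar i)) :
    ∀ (x : (k : Fin m) → Fin (n k) → ℝ), (∀ i, x i ∈ simplex (n i)) →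
      ∑ i, dot (x i - xstar i) (payoff A x i) = 0 := by
  intro x hx
  have hxsum : ∀ i, ∑ j, x i j = 1 := fun i => (hx i).2
  have hxssum : ∀ i, ∑ j, xstar i j = 1 := fun i => (hxs i).2
  -- the payoff vector at the fully mixed NE is constant
  have hconstpay : ∀ i j, payoff A xstar i j = dot (xstar i) (payoff A xstar i) := by
    intro i j
    set p := payoff A xstar i with hp
    set v := dot (xstar i) p with hv
    have hle : ∀ l, p l ≤ v := by
      intro l
      have hs : (Pi.single l 1 : Fin (n i) → ℝ) ∈ simplex (n i) := by
        constructor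
        · intro j'; by_cases h : j' = l <;> simp [Pi.single_apply, h]
        · simp [Pi.single_apply]
      have h1 := hNE i _ hs
      have h2 : dot (Pi.single l 1 : Fin (n i) → ℝ) p = p l := by
        simp [dot, Pi.single_apply]
      rw [h2] at h1; exact h1
    have hzero : ∑ j', xstar i j' * (v - p j') = 0 := by
      have e1 : ∑ j', xstar i j' * (v - p j')
          = (∑ j', xstar i j') * v - dot (xstar i) p := by
        simp only [mul_sub, Finset.sum_sub_distrib, dot, Finset.sum_mul]
      rw [e1, hxssum i, ← hv]; ring
    have hterm := (Finset.sum_eq_zero_iff_of_nonneg (fun j' _ =>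
      mul_nonneg (hfull i j').le (sub_nonneg.2 (hle j')))).mp hzero j (Finset.mem_univ j)
    rcases mul_eq_zero.mp hterm with h | h
    · exact absurd h (hfull i j).ne'
    · linarith
  -- notation for the bilinear pieces
  set f : Fin m → Fin m → ℝ := fun i k => dot (x i) ((A i k).mulVec (x k)) with hf
  set g : Fin m → Fin m → ℝ := fun i k => dot (xstar i) ((A i k).mulVec (x k)) with hg
  set h : Fin m → Fin m → ℝ := fun i k => dot (xstar i) ((A i k).mulVec (xstar k)) with hh
  set C2 : ℝ := ∑ i, ∑ k ∈ Finset.univ.erase i, c i k with hC2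
  have hgoal : ∑ i, dot (x i - xstar i) (payoff A x i)
      = (∑ i, ∑ k ∈ Finset.univ.erase i, f i k)
        - (∑ i, ∑ k ∈ Finset.univ.erase i, g i k) := by
    rw [← Finset.sum_sub_distrib]
    refine Finset.sum_congr rfl fun i _ => ?_
    rw [dot_sub_left, payoff, dot_sum_right, dot_sum_right]
  -- 2 * ∑∑ f = C2
  have hTf : (∑ i, ∑ k ∈ Finset.univ.erase i, f i k)
      + (∑ i, ∑ k ∈ Finset.univ.erase i, f i k) = C2 := by
    nth_rewrite 2 [show (∑ i, ∑ k ∈ Finset.univ.erase i, f i k)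
      = ∑ i, ∑ k ∈ Finset.univ.erase i, f k i from sum_erase_comm f]
    rw [← Finset.sum_add_distrib, hC2]
    refine Finset.sum_congr rfl fun i _ => ?_
    rw [← Finset.sum_add_distrib]
    refine Finset.sum_congr rfl fun k hk => ?_
    have hki : k ≠ i := (Finset.mem_erase.mp hk).1
    exact pair_sum (A i k) (A k i) _ (hconst i k (Ne.symm hki)) _ _ (hxsum i) (hxsum k)
  have hTh : (∑ i, ∑ k ∈ Finset.univ.erase i, h i k)
      + (∑ i, ∑ k ∈ Finset.univ.erase i, h i k) = C2 := by
    nth_rewrite 2 [show (∑ i, ∑ k ∈ Finset.univ.erase i, h i k)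
      = ∑ i, ∑ k ∈ Finset.univ.erase i, h k i from sum_erase_comm h]
    rw [← Finset.sum_add_distrib, hC2]
    refine Finset.sum_congr rfl fun i _ => ?_
    rw [← Finset.sum_add_distrib]
    refine Finset.sum_congr rfl fun k hk => ?_
    have hki : k ≠ i := (Finset.mem_erase.mp hk).1
    exact pair_sum _ _ _ (hconst i k (Ne.symm hki)) _ _ (hxssum i) (hxssum k)
  -- T g = C2 - T h
  have hTg : (∑ i, ∑ k ∈ Finset.univ.erase i, g i k)
      = C2 - ∑ i, ∑ k ∈ Finset.univ.erase i, h i k := by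
    have e1 : ∀ i k, k ∈ Finset.univ.erase i →
        g i k = c i k - dot (x k) ((A k i).mulVec (xstar i)) := by
      intro i k hk
      have hki : k ≠ i := (Finset.mem_erase.mp hk).1
      have := pair_sum _ _ _ (hconst i k (Ne.symm hki)) _ _ (hxssum i) (hxsum k)
      simp only [hg]; linarith [this]
    have e2 : (∑ i, ∑ k ∈ Finset.univ.erase i, g i k)
        = C2 - ∑ i, ∑ k ∈ Finset.univ.erase i, dot (x k) ((A k i).mulVec (xstar i)) := by
      rw [hC2, ← Finset.sum_sub_distrib]
      refine Finset.sum_congr rfl fun i _ => ?_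
      rw [← Finset.sum_sub_distrib]
      exact Finset.sum_congr rfl fun k hk => e1 i k hk
    rw [e2]
    congr 1
    rw [show (∑ i, ∑ k ∈ Finset.univ.erase i, dot (x k) ((A k i).mulVec (xstar i)))
      = ∑ k, ∑ i ∈ Finset.univ.erase k, dot (x k) ((A k i).mulVec (xstar i)) from
      sum_erase_comm (fun i k => dot (x k) ((A k i).mulVec (xstar i)))]
    refine Finset.sum_congr rfl fun k _ => ?_
    have e3 : ∑ i ∈ Finset.univ.erase k, dot (x k) ((A k i).mulVec (xstar i))
        = dot (x k) (payoff A xstar k) := (dot_sum_right _ _ _).symm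
    have e4 : ∑ i ∈ Finset.univ.erase k, h k i
        = dot (xstar k) (payoff A xstar k) := (dot_sum_right _ _ _).symm
    rw [e3, e4]
    -- dot (x k) (payoff A xstar k) = v_k
    have : dot (x k) (payoff A xstar k)
        = (∑ j, x k j) * dot (xstar k) (payoff A xstar k) := by
      rw [dot, Finset.sum_mul]
      exact Finset.sum_congr rfl fun j _ => by rw [hconstpay k j]
    rw [this, hxsum k, one_mul]
  rw [hgoal, hTg]
  linarith
end
end

section
/- (Constant of motion for lossless game dynamics.) Consider a graphical constant-sum game with a fully mixed Nash equilibrium x̂* = (x*_1,…,x*_m). Suppose each agent i uses a convex combination of FTRL dynamics: fix strictly convex continuous regularizers h_{i1},…,h_{iℓ_i} : Δ^{n_i} → ℝ and weights α_{i1},…,α_{iℓ_i} ≥ 0 with ∑_ℓ α_{iℓ} = 1. Let (q_i, x_i)_{i=1}^m be continuous trajectories on [0,∞) satisfying, for all t ≥ 0: q_i(t) = q_i(0) + ∫₀ᵗ p_i(τ) dτ with p_i(τ) = ∑_{k ≠ i} A^{ik} x_k(τ), and x_i(t) = ∑_{ℓ=1}^{ℓ_i} α_{iℓ} · argmax_{x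 ∈ Δ^{n_i}} (⟨q_i(t), x⟩ − h_{iℓ}(x)). Then the function H(t) := ∑_{i=1}^m ∑_{ℓ=1}^{ℓ_i} α_{iℓ} ( h_{iℓ}*(q_i(t)) − ⟨q_i(t), x*_i⟩ + h_{iℓ}(x*_i) ) is constant in t, i.e. H(t) = H(0) for all t ≥ 0. -/
open scoped BigOperators
open MeasureTheory

noncomputable section

/-!
Each agent's summand `Φᵢ` of `H` is a convex function of the cumulative payoff `qᵢ`, and
`xᵢ - x*ᵢ` is a subgradient of it at `qᵢ`: a maximizer defining `h*(q)` is a subgradient of `h*`.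
As `qᵢ` has derivative `pᵢ` and `xᵢ` is continuous, this subgradient sandwich makes `H`
differentiable with derivative `∑ᵢ ⟨xᵢ - x*ᵢ, pᵢ(x̂)⟩`. In a constant-sum game
`∑ᵢ ⟨uᵢ, pᵢ(ŵ)⟩ + ∑ᵢ ⟨wᵢ, pᵢ(û)⟩` does not depend on the profiles `û, ŵ`, and at a fully mixed
equilibrium each `pᵢ(x̂*)` is a constant vector; together these force the derivative to vanish.
-/

open Set Filter Topology Asymptotics Finset Matrix

theorem simplex_eq_stdSimplex (d : ℕ) : simplex d = stdSimplex ℝ (Fin d) := rfl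

theorem dotProduct_mulVec_add_dotProduct_mulVec_of_add_eq {d e : ℕ}
    {M : Matrix (Fin d) (Fin e) ℝ} {N : Matrix (Fin e) (Fin d) ℝ} {c : ℝ}
    (hMN : ∀ j l, M j l + N l j = c) {u : Fin d → ℝ} {w : Fin e → ℝ}
    (hu : ∑ j, u j = 1) (hw : ∑ l, w l = 1) :
    u ⬝ᵥ (M *ᵥ w) + w ⬝ᵥ (N *ᵥ u) = c :=
  calc u ⬝ᵥ (M *ᵥ w) + w ⬝ᵥ (N *ᵥ u) = ∑ j, ∑ l, c * (u j * w l) := by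
        simp only [dotProduct, mulVec, Finset.mul_sum]
        rw [Finset.sum_comm (s := Finset.univ (α := Fin e)), ← Finset.sum_add_distrib]
        refine Finset.sum_congr rfl fun j _ => ?_
        rw [← Finset.sum_add_distrib]
        refine Finset.sum_congr rfl fun l _ => ?_
        rw [← hMN j l]
        ring
    _ = c := by simp only [← Finset.mul_sum, hu, hw, mul_one]

theorem eq_dotProduct_of_forall_dotProduct_le {d : ℕ} {p xs : Fin d → ℝ}
    (hxs : xs ∈ simplex d) (hpos : ∀ j, 0 < xs j)
    (hbest : ∀ y ∈ simplex d, y ⬝ᵥ p ≤ xs ⬝ᵥ p) (j : Fin d) : p j = xs ⬝ᵥ p := by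
  have hle : ∀ l, p l ≤ xs ⬝ᵥ p := fun l => by
    have hl := hbest _ (by rw [simplex_eq_stdSimplex]; exact single_mem_stdSimplex ℝ l)
    rwa [single_dotProduct, one_mul] at hl
  have hgap : ∑ l, xs l * (xs ⬝ᵥ p - p l) = 0 := by
    simp only [mul_sub, Finset.sum_sub_distrib, ← Finset.sum_mul, hxs.2, one_mul]
    exact sub_self _
  have hgap_j := (Finset.sum_eq_zero_iff_of_nonneg fun l _ =>
    mul_nonneg (hxs.1 l) (sub_nonneg.2 (hle l))).1 hgap j (Finset.mem_univ j)
  linarith [(mul_eq_zero.1 hgap_j).resolve_left (hpos j).ne']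

theorem dotProduct_eq_of_forall_dotProduct_le {d : ℕ} {p xs : Fin d → ℝ}
    (hxs : xs ∈ simplex d) (hpos : ∀ j, 0 < xs j)
    (hbest : ∀ y ∈ simplex d, y ⬝ᵥ p ≤ xs ⬝ᵥ p) {y : Fin d → ℝ} (hy : y ∈ simplex d) :
    y ⬝ᵥ p = xs ⬝ᵥ p :=
  calc y ⬝ᵥ p = ∑ j, y j * (xs ⬝ᵥ p) := Finset.sum_congr rfl fun j _ => by
        rw [← eq_dotProduct_of_forall_dotProduct_le hxs hpos hbest j]
    _ = xs ⬝ᵥ p := by rw [← Finset.sum_mul, hy.2, one_mul]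

theorem HasDerivWithinAt.comp_of_subgradient {d : ℕ} {Q : ℝ → Fin d → ℝ} {Q' : Fin d → ℝ}
    {S : Set ℝ} {s : ℝ} (hQ : HasDerivWithinAt Q Q' S s) {Φ : (Fin d → ℝ) → ℝ}
    {σ : (Fin d → ℝ) → Fin d → ℝ} (hΦ : ∀ a b, Φ a - Φ b ≤ σ a ⬝ᵥ (a - b))
    (hσQ : ContinuousWithinAt (fun u => σ (Q u)) S s) :
    HasDerivWithinAt (fun u => Φ (Q u)) (σ (Q s) ⬝ᵥ Q') S s := by
  have hlin : HasDerivWithinAt (fun u => σ (Q s) ⬝ᵥ (Q u - Q s)) (σ (Q s) ⬝ᵥ Q') S s :=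
    HasDerivWithinAt.fun_sum fun j _ =>
      ((hasDerivWithinAt_pi.1 hQ j).sub_const (Q s j)).const_mul (σ (Q s) j)
  have hcross : (fun u => (σ (Q u) - σ (Q s)) ⬝ᵥ (Q u - Q s)) =o[𝓝[S] s] fun u => u - s := by
    refine IsLittleO.fun_sum fun j _ => ?_
    have hσj : (fun u => σ (Q u) j - σ (Q s) j) =o[𝓝[S] s] fun _ => (1 : ℝ) :=
      (isLittleO_one_iff ℝ).2 <| by
        simpa using (((continuous_apply j).tendsto _).comp hσQ).sub_const (σ (Q s) j)
    simpa using hσj.mul_isBigO (hasDerivWithinAt_pi.1 hQ j).hasFDerivWithinAt.isBigO_sub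
  -- the subgradient inequality at both endpoints squeezes the remainder between `0` and `hcross`
  have hrem : (fun u => Φ (Q u) - Φ (Q s) - σ (Q s) ⬝ᵥ (Q u - Q s)) =o[𝓝[S] s]
      fun u => u - s := by
    refine (IsBigO.of_bound' (Eventually.of_forall fun u => ?_)).trans_isLittleO hcross
    have hup := hΦ (Q u) (Q s)
    have hlow := hΦ (Q s) (Q u)
    rw [← neg_sub (Q u), dotProduct_neg] at hlow
    rw [Real.norm_eq_abs, Real.norm_eq_abs, sub_dotProduct]
    exact abs_le_abs_of_nonneg (by linarith) (by linarith)
  rw [hasDerivWithinAt_iff_isLittleO]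
  refine (hrem.add (hasDerivWithinAt_iff_isLittleO.1 hlin)).congr_left fun u => ?_
  simp only [sub_self, dotProduct_zero]
  ring

theorem hasDerivWithinAt_Ici_of_eq_integral {E : Type*} [NormedAddCommGroup E]
    [NormedSpace ℝ E] [CompleteSpace E] {q p : ℝ → E} (hp : Continuous p)
    (hq : ∀ t, 0 ≤ t → q t = q 0 + ∫ τ in (0 : ℝ)..t, p τ) {s : ℝ} (hs : 0 ≤ s) :
    HasDerivWithinAt q (p s) (Ici 0) s :=
  ((hp.integral_hasStrictDerivAt 0 s).hasDerivAt.const_add (q 0)).hasDerivWithinAt.congr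
    (fun u hu => hq u hu) (hq s hs)

section GraphicalGame

variable {m : ℕ} {n : Fin m → ℕ} (A : (i k : Fin m) → Matrix (Fin (n i)) (Fin (n k)) ℝ)

def totalPayoff (u w : (i : Fin m) → Fin (n i) → ℝ) : ℝ := ∑ i, u i ⬝ᵥ payoff A w i

variable {A}

theorem continuous_payoff {x : (k : Fin m) → ℝ → Fin (n k) → ℝ} (hx : ∀ k, Continuous (x k))
    (i : Fin m) : Continuous fun τ => payoff A (fun k => x k τ) i :=
  continuous_finsetSum _ fun k _ => continuous_const.matrix_mulVec (hx k)

theorem totalPayoff_add_totalPayoff_swap {c : Fin m → Fin m → ℝ}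
    (hconst : ∀ i k, i ≠ k → ∀ j l, A i k j l + A k i l j = c i k)
    {u w : (i : Fin m) → Fin (n i) → ℝ} (hu : ∀ i, u i ∈ simplex (n i))
    (hw : ∀ i, w i ∈ simplex (n i)) :
    totalPayoff A u w + totalPayoff A w u = ∑ i, ∑ k ∈ univ.erase i, c i k := by
  have hswap : totalPayoff A w u = ∑ i, ∑ k ∈ univ.erase i, w k ⬝ᵥ (A k i *ᵥ u i) := by
    simp only [totalPayoff, payoff, dotProduct_sum]
    exact Finset.sum_comm' fun i k => by simp [ne_comm]
  rw [hswap]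
  simp only [totalPayoff, payoff, dotProduct_sum, ← Finset.sum_add_distrib]
  refine Finset.sum_congr rfl fun i _ => Finset.sum_congr rfl fun k hk => ?_
  exact dotProduct_mulVec_add_dotProduct_mulVec_of_add_eq
    (hconst i k (Finset.ne_of_mem_erase hk).symm) (hu i).2 (hw k).2

theorem totalPayoff_self_eq_of_isNash_of_pos {c : Fin m → Fin m → ℝ}
    (hconst : ∀ i k, i ≠ k → ∀ j l, A i k j l + A k i l j = c i k)
    {xs : (i : Fin m) → Fin (n i) → ℝ} (hxs : ∀ i, xs i ∈ simplex (n i))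
    (hpos : ∀ i j, 0 < xs i j)
    (hNE : ∀ i, ∀ y ∈ simplex (n i), y ⬝ᵥ payoff A xs i ≤ xs i ⬝ᵥ payoff A xs i)
    {y : (i : Fin m) → Fin (n i) → ℝ} (hy : ∀ i, y i ∈ simplex (n i)) :
    totalPayoff A y y = totalPayoff A xs y := by
  have hdev : totalPayoff A y xs = totalPayoff A xs xs := Finset.sum_congr rfl fun i _ =>
    dotProduct_eq_of_forall_dotProduct_le (hxs i) (hpos i) (hNE i) (hy i)
  linarith [totalPayoff_add_totalPayoff_swap hconst hy hy,
    totalPayoff_add_totalPayoff_swap hconst hxs hxs, totalPayoff_add_totalPayoff_swap hconst hxs hy]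

end GraphicalGame

section FTRL

variable {d K : ℕ}

def IsRegularizedArgmax (h : (Fin d → ℝ) → ℝ) (f : (Fin d → ℝ) → Fin d → ℝ) : Prop :=
  ∀ q, f q ∈ simplex d ∧ ∀ y ∈ simplex d, q ⬝ᵥ y - h y ≤ q ⬝ᵥ f q - h (f q)

theorem IsRegularizedArgmax.sub_le {h : (Fin d → ℝ) → ℝ} {f : (Fin d → ℝ) → Fin d → ℝ}
    (hf : IsRegularizedArgmax h f) (a b : Fin d → ℝ) :
    (a ⬝ᵥ f a - h (f a)) - (b ⬝ᵥ f b - h (f b)) ≤ f a ⬝ᵥ (a - b) := by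
  have := (hf b).2 (f a) (hf a).1
  rw [dotProduct_sub, dotProduct_comm (f a), dotProduct_comm (f a)]
  linarith

/-- When `f ℓ` is the regularized argmax of `h ℓ`, `q ⬝ᵥ f ℓ q - h ℓ (f ℓ q)` is the conjugate
`(h ℓ)*(q)`, so this is one agent's summand of the constant of motion. -/
def ftrlEnergy (α : Fin K → ℝ) (h : Fin K → (Fin d → ℝ) → ℝ)
    (f : Fin K → (Fin d → ℝ) → Fin d → ℝ) (xs q : Fin d → ℝ) : ℝ :=
  ∑ ℓ, α ℓ * ((q ⬝ᵥ f ℓ q - h ℓ (f ℓ q)) - q ⬝ᵥ xs + h ℓ xs)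

theorem ftrlEnergy_sub_le {α : Fin K → ℝ} {h : Fin K → (Fin d → ℝ) → ℝ}
    {f : Fin K → (Fin d → ℝ) → Fin d → ℝ} (hf : ∀ ℓ, IsRegularizedArgmax (h ℓ) (f ℓ))
    (hα : ∀ ℓ, 0 ≤ α ℓ) (hα1 : ∑ ℓ, α ℓ = 1) (xs a b : Fin d → ℝ) :
    ftrlEnergy α h f xs a - ftrlEnergy α h f xs b ≤ (∑ ℓ, α ℓ • f ℓ a - xs) ⬝ᵥ (a - b) :=
  calc ftrlEnergy α h f xs a - ftrlEnergy α h f xs b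
      = ∑ ℓ, α ℓ * ((a ⬝ᵥ f ℓ a - h ℓ (f ℓ a)) - (b ⬝ᵥ f ℓ b - h ℓ (f ℓ b))
          - xs ⬝ᵥ (a - b)) := by
        simp only [ftrlEnergy, ← Finset.sum_sub_distrib, dotProduct_comm xs, sub_dotProduct]
        exact Finset.sum_congr rfl fun ℓ _ => by ring
    _ ≤ ∑ ℓ, α ℓ * (f ℓ a ⬝ᵥ (a - b) - xs ⬝ᵥ (a - b)) := Finset.sum_le_sum fun ℓ _ =>
        mul_le_mul_of_nonneg_left (by linarith [(hf ℓ).sub_le a b]) (hα ℓ)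
    _ = (∑ ℓ, α ℓ • f ℓ a - xs) ⬝ᵥ (a - b) := by
        simp only [sub_dotProduct, sum_dotProduct, smul_dotProduct, smul_eq_mul, mul_sub,
          Finset.sum_sub_distrib, ← Finset.sum_mul, hα1, one_mul]

theorem sum_smul_mem_simplex {α : Fin K → ℝ} {h : Fin K → (Fin d → ℝ) → ℝ}
    {f : Fin K → (Fin d → ℝ) → Fin d → ℝ} (hf : ∀ ℓ, IsRegularizedArgmax (h ℓ) (f ℓ))
    (hα : ∀ ℓ, 0 ≤ α ℓ) (hα1 : ∑ ℓ, α ℓ = 1) (q : Fin d → ℝ) :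
    ∑ ℓ, α ℓ • f ℓ q ∈ simplex d := by
  rw [simplex_eq_stdSimplex]
  exact (convex_stdSimplex ℝ _).sum_mem (fun ℓ _ => hα ℓ) hα1 fun ℓ _ => (hf ℓ q).1

theorem hasDerivWithinAt_ftrlEnergy {α : Fin K → ℝ} {h : Fin K → (Fin d → ℝ) → ℝ}
    {f : Fin K → (Fin d → ℝ) → Fin d → ℝ} (hf : ∀ ℓ, IsRegularizedArgmax (h ℓ) (f ℓ))
    (hα : ∀ ℓ, 0 ≤ α ℓ) (hα1 : ∑ ℓ, α ℓ = 1) (xs : Fin d → ℝ) {q x p : ℝ → Fin d → ℝ}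
    (hp : Continuous p) (hx : Continuous x)
    (hq : ∀ t, 0 ≤ t → q t = q 0 + ∫ τ in (0 : ℝ)..t, p τ)
    (hxq : ∀ t, 0 ≤ t → x t = ∑ ℓ, α ℓ • f ℓ (q t)) {s : ℝ} (hs : 0 ≤ s) :
    HasDerivWithinAt (fun t => ftrlEnergy α h f xs (q t)) ((x s - xs) ⬝ᵥ p s) (Ici 0) s := by
  have hx_sub : Continuous fun t => x t - xs := hx.sub continuous_const
  have hσ : ContinuousWithinAt (fun t => ∑ ℓ, α ℓ • f ℓ (q t) - xs) (Ici 0) s :=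
    hx_sub.continuousWithinAt.congr (fun t ht => by rw [hxq t ht]) (by rw [hxq s hs])
  rw [hxq s hs]
  exact (hasDerivWithinAt_Ici_of_eq_integral hp hq hs).comp_of_subgradient
    (ftrlEnergy_sub_le hf hα hα1 xs) hσ

end FTRL

theorem constant_of_motion_for_lossless_game_dynamic_general
    (m : ℕ) (n : Fin m → ℕ)
    (A : (i k : Fin m) → Matrix (Fin (n i)) (Fin (n k)) ℝ)
    (c : Fin m → Fin m → ℝ)
    (hconst : ∀ i k, i ≠ k → ∀ (j : Fin (n i)) (l : Fin (n k)),
      A i k j l + A k i l j = c i k)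
    (xstar : (i : Fin m) → Fin (n i) → ℝ)
    (hxs : ∀ i, xstar i ∈ simplex (n i))
    (hfull : ∀ i j, 0 < xstar i j)
    (hNE : ∀ i, ∀ y ∈ simplex (n i),
      dot y (payoff A xstar i) ≤ dot (xstar i) (payoff A xstar i))
    (k : Fin m → ℕ)
    (h : (i : Fin m) → Fin (k i) → (Fin (n i) → ℝ) → ℝ)
    (α : (i : Fin m) → Fin (k i) → ℝ)
    (hα : ∀ i ℓ, 0 ≤ α i ℓ) (hα1 : ∀ i, ∑ ℓ, α i ℓ = 1)
    (f : (i : Fin m) → Fin (k i) → (Fin (n i) → ℝ) → (Fin (n i) → ℝ))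
    (hf : ∀ i ℓ q, f i ℓ q ∈ simplex (n i) ∧
      ∀ y ∈ simplex (n i), dot q y - h i ℓ y ≤ dot q (f i ℓ q) - h i ℓ (f i ℓ q))
    (q : (i : Fin m) → ℝ → Fin (n i) → ℝ)
    (x : (i : Fin m) → ℝ → Fin (n i) → ℝ)
    (hxc : ∀ i, Continuous (x i))
    (hq : ∀ (i : Fin m) (t : ℝ), 0 ≤ t →
      q i t = q i 0 + ∫ τ in (0:ℝ)..t, payoff A (fun k' => x k' τ) i)
    (hx : ∀ (i : Fin m) (t : ℝ), 0 ≤ t →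
      x i t = ∑ ℓ, α i ℓ • f i ℓ (q i t)) :
    ∀ t : ℝ, 0 ≤ t →
      (∑ i, ∑ ℓ, α i ℓ *
        ((dot (q i t) (f i ℓ (q i t)) - h i ℓ (f i ℓ (q i t)))
          - dot (q i t) (xstar i) + h i ℓ (xstar i))) =
      (∑ i, ∑ ℓ, α i ℓ *
        ((dot (q i 0) (f i ℓ (q i 0)) - h i ℓ (f i ℓ (q i 0)))
          - dot (q i 0) (xstar i) + h i ℓ (xstar i))) := by
  set H : ℝ → ℝ := fun t => ∑ i, ftrlEnergy (α i) (h i) (f i) (xstar i) (q i t)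
  have hH' : ∀ s ∈ Ici (0 : ℝ), HasDerivWithinAt H 0 (Ici 0) s := fun s hs => by
    have hbalance : ∑ i, (x i s - xstar i) ⬝ᵥ payoff A (fun k => x k s) i = 0 := by
      have hx_mem : ∀ i, x i s ∈ simplex (n i) := fun i =>
        hx i s hs ▸ sum_smul_mem_simplex (hf i) (hα i) (hα1 i) (q i s)
      simp only [sub_dotProduct, Finset.sum_sub_distrib]
      exact sub_eq_zero.2 (totalPayoff_self_eq_of_isNash_of_pos hconst hxs hfull hNE hx_mem)
    refine (HasDerivWithinAt.fun_sum fun i _ => ?_).congr_deriv hbalance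
    exact hasDerivWithinAt_ftrlEnergy (hf i) (hα i) (hα1 i) (xstar i)
      (continuous_payoff hxc i) (hxc i) (hq i) (hx i) hs
  intro t ht
  exact constant_of_has_deriv_right_zero
    (fun s hs => (hH' s hs.1).continuousWithinAt.mono Icc_subset_Ici_self)
    (fun s hs => (hH' s hs.1).mono (Ici_subset_Ici.2 hs.1)) t ⟨ht, le_rfl⟩

theorem constant_of_motion_for_lossless_game_dynamic
    (m : ℕ) (n : Fin m → ℕ)
    (A : (i k : Fin m) → Matrix (Fin (n i)) (Fin (n k)) ℝ)
    (c : Fin m → Fin m → ℝ) (hcsym : ∀ i k, c i k = c k i)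
    (hconst : ∀ i k, i ≠ k → ∀ (j : Fin (n i)) (l : Fin (n k)),
      A i k j l + A k i l j = c i k)
    (xstar : (i : Fin m) → Fin (n i) → ℝ)
    (hxs : ∀ i, xstar i ∈ simplex (n i))
    (hfull : ∀ i j, 0 < xstar i j)
    (hNE : ∀ i, ∀ y ∈ simplex (n i),
      dot y (payoff A xstar i) ≤ dot (xstar i) (payoff A xstar i))
    (k : Fin m → ℕ)
    (h : (i : Fin m) → Fin (k i) → (Fin (n i) → ℝ) → ℝ)
    (hconv : ∀ i ℓ, StrictConvexOn ℝ (simplex (n i)) (h i ℓ))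
    (hcont : ∀ i ℓ, ContinuousOn (h i ℓ) (simplex (n i)))
    (α : (i : Fin m) → Fin (k i) → ℝ)
    (hα : ∀ i ℓ, 0 ≤ α i ℓ) (hα1 : ∀ i, ∑ ℓ, α i ℓ = 1)
    (f : (i : Fin m) → Fin (k i) → (Fin (n i) → ℝ) → (Fin (n i) → ℝ))
    (hf : ∀ i ℓ q, f i ℓ q ∈ simplex (n i) ∧
      ∀ y ∈ simplex (n i), dot q y - h i ℓ y ≤ dot q (f i ℓ q) - h i ℓ (f i ℓ q))
    (q : (i : Fin m) → ℝ → Fin (n i) → ℝ)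
    (x : (i : Fin m) → ℝ → Fin (n i) → ℝ)
    (hqc : ∀ i, Continuous (q i)) (hxc : ∀ i, Continuous (x i))
    (hq : ∀ (i : Fin m) (t : ℝ), 0 ≤ t →
      q i t = q i 0 + ∫ τ in (0:ℝ)..t, payoff A (fun k' => x k' τ) i)
    (hx : ∀ (i : Fin m) (t : ℝ), 0 ≤ t →
      x i t = ∑ ℓ, α i ℓ • f i ℓ (q i t)) :
    ∀ t : ℝ, 0 ≤ t →
      (∑ i, ∑ ℓ, α i ℓ *
        ((dot (q i t) (f i ℓ (q i t)) - h i ℓ (f i ℓ (q i t)))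
          - dot (q i t) (xstar i) + h i ℓ (xstar i))) =
      (∑ i, ∑ ℓ, α i ℓ *
        ((dot (q i 0) (f i ℓ (q i 0)) - h i ℓ (f i ℓ (q i 0)))
          - dot (q i 0) (xstar i) + h i ℓ (xstar i))) :=
  constant_of_motion_for_lossless_game_dynamic_general m n A c hconst xstar hxs hfull hNE k h α hα
    hα1 f hf q x hxc hq hx
end
end

section
/- (Bounded level sets of the reduced storage function.) Let h : Δ^n → ℝ be strictly convex and continuous, let h*(q) = max_{x ∈ Δ^n}(⟨q,x⟩ − h(x)), and let x* ∈ Δ^n have all coordinates strictly positive. Define L̄ : ℝ^{n−1} → ℝ by L̄(q'_1,…,q'_{n−1}) = h*((q'_1,…,q'_{n−1},0)) − ⟨(q'_1,…,q'_{n−1},0), x*⟩ + h(x*). Then for every c ∈ ℝ, the sublevel set { q' ∈ ℝ^{n−1} : L̄(q') ≤ c } is bounded. -/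
open scoped BigOperators

noncomputable section

/- STATEMENT 18 (bounded level sets of the reduced storage function): for a strictly
convex continuous regularizer h on Δ^{n+1} with unique maximizer f(q) realizing
h*(q) = ⟨q, f(q)⟩ − h(f(q)), and a fully mixed x* ∈ Δ^{n+1}, every sublevel set of
L̄(q') = h*((q',0)) − ⟨(q',0), x*⟩ + h(x*) on ℝⁿ is bounded. -/

theorem reduced_storage_sublevel_sets_bounded
    (n : ℕ) (h : (Fin (n + 1) → ℝ) → ℝ)
    (hconv : StrictConvexOn ℝ (simplex (n + 1)) h)
    (hcont : ContinuousOn h (simplex (n + 1)))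
    (f : (Fin (n + 1) → ℝ) → (Fin (n + 1) → ℝ))
    (hf : ∀ q, f q ∈ simplex (n + 1) ∧
      ∀ x ∈ simplex (n + 1), dot q x - h x ≤ dot q (f q) - h (f q))
    (xstar : Fin (n + 1) → ℝ) (hxs : xstar ∈ simplex (n + 1))
    (hfull : ∀ j, 0 < xstar j) (cc : ℝ) :
    Bornology.IsBounded {q' : Fin n → ℝ |
      (dot (Fin.snoc q' 0) (f (Fin.snoc q' 0)) - h (f (Fin.snoc q' 0)))
        - dot (Fin.snoc q' 0) xstar + h xstar ≤ cc} := by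
  classical
  obtain ⟨j0, -, hj0⟩ := Finset.exists_min_image (Finset.univ : Finset (Fin (n+1))) xstar
    ⟨⟨0, Nat.succ_pos n⟩, Finset.mem_univ _⟩
  set δ := xstar j0 with hδdef
  have hδpos : 0 < δ := hfull j0
  have hδle : ∀ j, δ ≤ xstar j := fun j => hj0 j (Finset.mem_univ j)
  have hxle1 : ∀ j, xstar j ≤ 1 := by
    intro j
    have h1 : xstar j ≤ ∑ k, xstar k :=
      Finset.single_le_sum (fun i _ => hxs.1 i) (Finset.mem_univ j)
    rw [hxs.2] at h1; exact h1
  have hδ1 : δ ≤ 1 := hxle1 j0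
  -- the perturbed points
  set y : Fin (n+1) → Fin (n+1) → ℝ :=
    fun j k => (1-δ) * xstar k + δ * (if k = j then 1 else 0) with hy
  have hysimp : ∀ j, y j ∈ simplex (n+1) := by
    intro j
    constructor
    · intro k
      by_cases hk : k = j <;> simp only [hy, hk, ite_true, ite_false] <;>
        nlinarith [hxs.1 j, hxs.1 k, hδpos, hδ1]
    · simp only [hy]
      rw [Finset.sum_add_distrib, ← Finset.mul_sum, ← Finset.mul_sum, hxs.2]
      simp
  set B : ℝ := Finset.univ.sup' ⟨j0, Finset.mem_univ _⟩ (fun j => h (y j)) with hB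
  have hBle : ∀ j, h (y j) ≤ B := fun j => Finset.le_sup' (fun j => h (y j)) (Finset.mem_univ j)
  set A : ℝ := |cc + B - h xstar| with hA
  have hA0 : 0 ≤ A := abs_nonneg _
  set D : ℝ := A / (δ * δ) with hD
  have hD0 : 0 ≤ D := div_nonneg hA0 (by positivity)
  rw [isBounded_iff_forall_norm_le]
  refine ⟨D + D/δ, ?_⟩
  intro q' hq'
  simp only [Set.mem_setOf_eq] at hq'
  set q : Fin (n+1) → ℝ := Fin.snoc q' 0 with hqdef
  set s : ℝ := dot q xstar with hs
  -- Key 1 : ∀ j, q j - s ≤ D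
  have key1 : ∀ j, q j - s ≤ D := by
    intro j
    have hm := (hf q).2 (y j) (hysimp j)
    have hdot : dot q (y j) = (1-δ) * s + δ * q j := by
      simp only [dot, hy, mul_add, Finset.sum_add_distrib, hs]
      congr 1
      · rw [Finset.mul_sum]; congr 1; ext k; ring
      · simp [mul_ite, Finset.sum_ite_eq', mul_comm]
    have h1 : δ * (q j - s) ≤ A := by
      have h2 : δ * (q j - s) - h (y j) + h xstar ≤ cc := by
        have := le_trans hm (le_of_eq rfl)
        nlinarith [hm, hq', hdot]
      have := hBle j
      calc δ * (q j - s) ≤ cc + h (y j) - h xstar := by linarith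
        _ ≤ cc + B - h xstar := by linarith
        _ ≤ A := le_abs_self _
    have h3 : q j - s ≤ A / δ := by
      rw [le_div_iff₀ hδpos]; linarith [h1]
    have h4 : A / δ ≤ D := by
      rw [hD]
      apply div_le_div_of_nonneg_left hA0 (by positivity)
      nlinarith
    linarith
  -- Key 2 : ∀ j, s ≤ q j + D / δ
  have key2 : ∀ j, s ≤ q j + D / δ := by
    intro j
    have hsum : s = ∑ l, q l * xstar l := rfl
    have hsplit : q j * xstar j + ∑ l ∈ Finset.univ.erase j, q l * xstar l = s := by
      rw [hsum]; exact Finset.add_sum_erase _ (fun l => q l * xstar l) (Finset.mem_univ j)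
    have herase : ∑ l ∈ Finset.univ.erase j, xstar l = 1 - xstar j := by
      have := Finset.add_sum_erase Finset.univ xstar (Finset.mem_univ j)
      rw [hxs.2] at this; linarith
    have hbound : ∑ l ∈ Finset.univ.erase j, q l * xstar l
        ≤ ∑ l ∈ Finset.univ.erase j, (s + D) * xstar l := by
      apply Finset.sum_le_sum
      intro l _
      have := key1 l
      have := hxs.1 l
      nlinarith
    rw [← Finset.mul_sum, herase] at hbound
    have hxj := hfull j
    have h5 : xstar j * s ≤ xstar j * q j + D := by nlinarith [hsplit, hbound, hxle1 j]
    have h6 : s - q j ≤ D / xstar j := by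
      rw [le_div_iff₀ hxj]; nlinarith
    have h7 : D / xstar j ≤ D / δ := by
      apply div_le_div_of_nonneg_left hD0 hδpos (hδle j)
    linarith
  -- s bounds
  have hqlast : q (Fin.last n) = 0 := Fin.snoc_last _ _
  have hsub : s ≤ D / δ := by have := key2 (Fin.last n); rw [hqlast] at this; linarith
  have hslb : -D ≤ s := by have := key1 (Fin.last n); rw [hqlast] at this; linarith
  -- conclude
  have hR0 : 0 ≤ D + D / δ := by positivity
  rw [pi_norm_le_iff_of_nonneg hR0]
  intro i
  have hqi : q (Fin.castSucc i) = q' i := Fin.snoc_castSucc _ _ _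
  have h1 := key1 (Fin.castSucc i)
  have h2 := key2 (Fin.castSucc i)
  rw [hqi] at h1 h2
  rw [Real.norm_eq_abs, abs_le]
  constructor
  · have : D / δ ≤ D / δ := le_refl _
    nlinarith [div_nonneg hD0 (le_of_lt hδpos)]
  · nlinarith [div_nonneg hD0 (le_of_lt hδpos)]
end
end
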